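/- Let k be a commutative ring, B ⊆ A an extension of k-algebras with 1_B = 1_A, and I an ideal of A with I ⊆ B. If B ⊆ A has depth 2n+1 (respectively, left or right depth 2n), then the quotient extension B/I ⊆ A/I also has depth 2n+1 (respectively, left or right depth 2n). In particular, d(B/I, A/I) ≤ d(B,A). -/

import Mathlib

/-! # Depth of subring extensions (Kadison–Young)
For a unital subring `B ⊆ A`, `CC B n` realizes the `n`-fold relative tensor power
`C_n(A,B) = A ⊗_B ⋯ ⊗_B A` (with `C_0(A,B) = B`) as a quotient of the iterated
tensor power over `ℤ` by the middle `B`-balancing relations, together with its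
natural left/right `A`- and `B`-actions.  Bimodule maps, the divisibility relation
`M ∣ q ⬝ N`, H-equivalence, the depth conditions and the minimum depth `d(B,A) ∈ ℕ∞`
are then defined exactly as in the paper. -/

open TensorProduct

universe u

variable (A : Type u) [Ring A]

/-- `Tpow A n` is the `(n+1)`-fold tensor power `A ⊗ℤ ⋯ ⊗ℤ A`. -/
noncomputable def Tpow : ℕ → ModuleCat.{u} ℤ
  | 0 => ModuleCat.of ℤ A
  | n + 1 => ModuleCat.of ℤ (A ⊗[ℤ] (Tpow n : Type u))

/-- Multiplication by `a : A` on the leftmost tensor factor. -/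
noncomputable def lmulT (a : A) : ∀ n, (Tpow A n : Type u) →ₗ[ℤ] (Tpow A n : Type u)
  | 0 => (LinearMap.mulLeft ℤ a : A →ₗ[ℤ] A)
  | n + 1 => LinearMap.rTensor (Tpow A n : Type u) (LinearMap.mulLeft ℤ a)

/-- Multiplication by `a : A` on the rightmost tensor factor. -/
noncomputable def rmulT (a : A) : ∀ n, (Tpow A n : Type u) →ₗ[ℤ] (Tpow A n : Type u)
  | 0 => (LinearMap.mulRight ℤ a : A →ₗ[ℤ] A)
  | n + 1 => LinearMap.lTensor A (rmulT a n)

private theorem lmulT_succ_apply (a : A) (n : ℕ) (x : A ⊗[ℤ] (Tpow A n : Type u)) :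
    lmulT A a (n+1) x = LinearMap.rTensor (Tpow A n : Type u) (LinearMap.mulLeft ℤ a) x := rfl

private theorem rmulT_succ_apply (a : A) (n : ℕ) (x : A ⊗[ℤ] (Tpow A n : Type u)) :
    rmulT A a (n+1) x = LinearMap.lTensor A (rmulT A a n) x := rfl

private theorem auxcomm (M : Type u) [AddCommGroup M] [Module ℤ M] (a : A) (g : M →ₗ[ℤ] M)
    (x : A ⊗[ℤ] M) :
    (LinearMap.rTensor M (LinearMap.mulLeft ℤ a)) ((LinearMap.lTensor A g) x) =
    (LinearMap.lTensor A g) ((LinearMap.rTensor M (LinearMap.mulLeft ℤ a)) x) := by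
  induction x using TensorProduct.induction_on with
  | zero => simp
  | tmul c t => simp
  | add y z hy hz => simp only [map_add, hy, hz]

theorem lmulT_rmulT_comm (a b : A) : ∀ (n : ℕ) (x : (Tpow A n : Type u)),
    lmulT A a n (rmulT A b n x) = rmulT A b n (lmulT A a n x)
  | 0, x => (mul_assoc a x b).symm
  | n + 1, x => by
    show (lmulT A a (n+1)) ((rmulT A b (n+1)) x) = (rmulT A b (n+1)) ((lmulT A a (n+1)) x)
    rw [lmulT, rmulT]
    exact auxcomm A (Tpow A n : Type u) a (rmulT A b n) x

private theorem aux1 (M : Type u) [AddCommGroup M] [Module ℤ M] (a c d : A) (t s : M) :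
    LinearMap.rTensor M (LinearMap.mulLeft ℤ a) (c ⊗ₜ[ℤ] t - d ⊗ₜ[ℤ] s) =
      (a * c) ⊗ₜ[ℤ] t - (a * d) ⊗ₜ[ℤ] s := by simp

private theorem aux2 (M : Type u) [AddCommGroup M] [Module ℤ M] (g : M →ₗ[ℤ] M) (c d : A)
    (t s : M) :
    LinearMap.lTensor A g (c ⊗ₜ[ℤ] t - d ⊗ₜ[ℤ] s) = c ⊗ₜ[ℤ] (g t) - d ⊗ₜ[ℤ] (g s) := by simp

private theorem aux3 (M : Type u) [AddCommGroup M] [Module ℤ M] (a c : A) (t : M) :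
    LinearMap.rTensor M (LinearMap.mulLeft ℤ a) (c ⊗ₜ[ℤ] t) = (a * c) ⊗ₜ[ℤ] t := by simp

private theorem aux4 (M : Type u) [AddCommGroup M] [Module ℤ M] (g : M →ₗ[ℤ] M) (c : A) (t : M) :
    LinearMap.lTensor A g (c ⊗ₜ[ℤ] t) = c ⊗ₜ[ℤ] (g t) := by simp


variable {A}

/-- The `B`-balancing relations inside `Tpow A n`. -/
noncomputable def rel (B : Subring A) : ∀ n, Submodule ℤ (Tpow A n : Type u)
  | 0 => ⊥
  | n + 1 =>
      Submodule.span ℤ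
        {x : (Tpow A (n+1) : Type u) |
          (∃ (a : A) (b : B) (t : (Tpow A n : Type u)),
            x = ((a * (b : A)) ⊗ₜ[ℤ] t : A ⊗[ℤ] (Tpow A n : Type u)) -
                 a ⊗ₜ[ℤ] (lmulT A (b : A) n t)) ∨
          (∃ (a : A) (r : (Tpow A n : Type u)), r ∈ rel B n ∧
            x = (a ⊗ₜ[ℤ] r : A ⊗[ℤ] (Tpow A n : Type u)))}

theorem rel_succ (B : Subring A) (n : ℕ) :
    rel B (n+1) =
      Submodule.span ℤ
        {x : (Tpow A (n+1) : Type u) |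
          (∃ (a : A) (b : B) (t : (Tpow A n : Type u)),
            x = ((a * (b : A)) ⊗ₜ[ℤ] t : A ⊗[ℤ] (Tpow A n : Type u)) -
                 a ⊗ₜ[ℤ] (lmulT A (b : A) n t)) ∨
          (∃ (a : A) (r : (Tpow A n : Type u)), r ∈ rel B n ∧
            x = (a ⊗ₜ[ℤ] r : A ⊗[ℤ] (Tpow A n : Type u)))} := rfl

theorem rel_le_comap_lmulT (B : Subring A) (a : A) :
    ∀ n, rel B n ≤ (rel B n).comap (lmulT A a n)
  | 0 => bot_le
  | n + 1 => by
    rw [rel_succ, Submodule.span_le]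
    rintro x (⟨a', b, t, rfl⟩ | ⟨a', r, hr, rfl⟩) <;>
      refine SetLike.mem_coe.mpr (Submodule.mem_comap.mpr ?_) <;> rw [lmulT_succ_apply]
    · rw [map_sub, LinearMap.rTensor_tmul, LinearMap.rTensor_tmul, LinearMap.mulLeft_apply,
        LinearMap.mulLeft_apply]
      refine Submodule.subset_span (Or.inl ⟨a * a', b, t, ?_⟩)
      rw [mul_assoc]
    · rw [LinearMap.rTensor_tmul, LinearMap.mulLeft_apply]
      exact Submodule.subset_span (Or.inr ⟨a * a', r, hr, rfl⟩)

theorem rel_le_comap_rmulT (B : Subring A) (a : A) :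
    ∀ n, rel B n ≤ (rel B n).comap (rmulT A a n)
  | 0 => bot_le
  | n + 1 => by
    rw [rel_succ, Submodule.span_le]
    rintro x (⟨a', b, t, rfl⟩ | ⟨a', r, hr, rfl⟩) <;>
      refine SetLike.mem_coe.mpr (Submodule.mem_comap.mpr ?_) <;> rw [rmulT_succ_apply]
    · rw [map_sub, LinearMap.lTensor_tmul, LinearMap.lTensor_tmul, ← lmulT_rmulT_comm]
      exact Submodule.subset_span (Or.inl ⟨a', b, rmulT A a n t, rfl⟩)
    · rw [LinearMap.lTensor_tmul]
      exact Submodule.subset_span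
        (Or.inr ⟨a', rmulT A a n r, rel_le_comap_rmulT B a n hr, rfl⟩)

/-- `CC B n` is `C_n(A,B) = A ⊗_B ⋯ ⊗_B A` (`n` factors of `A`), with `CC B 0 = B`. -/
noncomputable def CC (B : Subring A) : ℕ → ModuleCat.{u} ℤ
  | 0 => ModuleCat.of ℤ B
  | n + 1 => ModuleCat.of ℤ ((Tpow A n : Type u) ⧸ rel B n)

/-- The left `A`-action on `C_{n+1}(A,B)`. -/
noncomputable def lA (B : Subring A) (a : A) (n : ℕ) :
    (CC B (n+1) : Type u) →ₗ[ℤ] (CC B (n+1) : Type u) :=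
  ModuleCat.Hom.hom (ModuleCat.ofHom (Submodule.mapQ _ _ (lmulT A a n) (rel_le_comap_lmulT B a n)))

/-- The right `A`-action on `C_{n+1}(A,B)`. -/
noncomputable def rA (B : Subring A) (a : A) (n : ℕ) :
    (CC B (n+1) : Type u) →ₗ[ℤ] (CC B (n+1) : Type u) :=
  ModuleCat.Hom.hom (ModuleCat.ofHom (Submodule.mapQ _ _ (rmulT A a n) (rel_le_comap_rmulT B a n)))

/-- The left `B`-action on `C_n(A,B)`. -/
noncomputable def lB (B : Subring A) (b : B) : ∀ n, (CC B n : Type u) →ₗ[ℤ] (CC B n : Type u)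
  | 0 => (LinearMap.mulLeft ℤ b : B →ₗ[ℤ] B)
  | n + 1 => lA B (b : A) n

/-- The right `B`-action on `C_n(A,B)`. -/
noncomputable def rB (B : Subring A) (b : B) : ∀ n, (CC B n : Type u) →ₗ[ℤ] (CC B n : Type u)
  | 0 => (LinearMap.mulRight ℤ b : B →ₗ[ℤ] B)
  | n + 1 => rA B (b : A) n

/-- `f` is a morphism of `B`-`B`-bimodules `C_m(A,B) → C_n(A,B)`. -/
def IsBBHom (B : Subring A) {m n : ℕ} (f : (CC B m : Type u) →ₗ[ℤ] (CC B n : Type u)) : Prop :=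
  ∀ b : B, (∀ x, f (lB B b m x) = lB B b n (f x)) ∧ (∀ x, f (rB B b m x) = rB B b n (f x))

/-- `f` is a morphism of `A`-`B`-bimodules `C_{m+1}(A,B) → C_{n+1}(A,B)`. -/
def IsABHom (B : Subring A) {m n : ℕ}
    (f : (CC B (m+1) : Type u) →ₗ[ℤ] (CC B (n+1) : Type u)) : Prop :=
  (∀ (a : A) x, f (lA B a m x) = lA B a n (f x)) ∧
  (∀ (b : B) x, f (rB B b (m+1) x) = rB B b (n+1) (f x))

/-- `f` is a morphism of `B`-`A`-bimodules `C_{m+1}(A,B) → C_{n+1}(A,B)`. -/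
def IsBAHom (B : Subring A) {m n : ℕ}
    (f : (CC B (m+1) : Type u) →ₗ[ℤ] (CC B (n+1) : Type u)) : Prop :=
  (∀ (b : B) x, f (lB B b (m+1) x) = lB B b (n+1) (f x)) ∧
  (∀ (a : A) x, f (rA B a m x) = rA B a n (f x))

/-- `C_m(A,B)` divides a multiple of `C_n(A,B)` as `B`-`B`-bimodules. -/
def DividesBB (B : Subring A) (m n : ℕ) : Prop :=
  ∃ (r : ℕ) (f : Fin r → ((CC B m : Type u) →ₗ[ℤ] (CC B n : Type u)))
    (g : Fin r → ((CC B n : Type u) →ₗ[ℤ] (CC B m : Type u))),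
    (∀ i, IsBBHom B (f i)) ∧ (∀ i, IsBBHom B (g i)) ∧
      ∑ i, (g i).comp (f i) = LinearMap.id

/-- `C_{m+1}(A,B)` divides a multiple of `C_{n+1}(A,B)` as `A`-`B`-bimodules. -/
def DividesAB (B : Subring A) (m n : ℕ) : Prop :=
  ∃ (r : ℕ) (f : Fin r → ((CC B (m+1) : Type u) →ₗ[ℤ] (CC B (n+1) : Type u)))
    (g : Fin r → ((CC B (n+1) : Type u) →ₗ[ℤ] (CC B (m+1) : Type u))),
    (∀ i, IsABHom B (f i)) ∧ (∀ i, IsABHom B (g i)) ∧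
      ∑ i, (g i).comp (f i) = LinearMap.id

/-- `C_{m+1}(A,B)` divides a multiple of `C_{n+1}(A,B)` as `B`-`A`-bimodules. -/
def DividesBA (B : Subring A) (m n : ℕ) : Prop :=
  ∃ (r : ℕ) (f : Fin r → ((CC B (m+1) : Type u) →ₗ[ℤ] (CC B (n+1) : Type u)))
    (g : Fin r → ((CC B (n+1) : Type u) →ₗ[ℤ] (CC B (m+1) : Type u))),
    (∀ i, IsBAHom B (f i)) ∧ (∀ i, IsBAHom B (g i)) ∧
      ∑ i, (g i).comp (f i) = LinearMap.id

/-- H-equivalence of `C_m` and `C_n` as `B`-`B`-bimodules. -/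
def HequivBB (B : Subring A) (m n : ℕ) : Prop := DividesBB B m n ∧ DividesBB B n m

/-- H-equivalence of `C_{m+1}` and `C_{n+1}` as `A`-`B`-bimodules. -/
def HequivAB (B : Subring A) (m n : ℕ) : Prop := DividesAB B m n ∧ DividesAB B n m

/-- H-equivalence of `C_{m+1}` and `C_{n+1}` as `B`-`A`-bimodules. -/
def HequivBA (B : Subring A) (m n : ℕ) : Prop := DividesBA B m n ∧ DividesBA B n m

/-- The extension `B ⊆ A` has depth `d`: depth `2n+1` (`n ≥ 0`) means
`C_{n+1} ∼ C_n` as `B`-`B`-bimodules, and right (resp. left) depth `2n` (`n ≥ 1`)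
means `C_{n+1} ∼ C_n` as `A`-`B`- (resp. `B`-`A`-) bimodules. -/
def HasDepth (B : Subring A) (d : ℕ) : Prop :=
  (∃ n : ℕ, d = 2 * n + 1 ∧ HequivBB B (n+1) n) ∨
  (∃ n : ℕ, d = 2 * (n+1) ∧ (HequivAB B (n+1) n ∨ HequivBA B (n+1) n))

/-- The minimum depth `d(B,A) ∈ ℕ∞` of the subring extension `B ⊆ A`. -/
noncomputable def depth (B : Subring A) : ℕ∞ :=
  sInf {d : ℕ∞ | ∃ m : ℕ, HasDepth B m ∧ d = (m : ℕ∞)}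

/-! A surjective ring map `q : A → A'` whose kernel lies in `B` induces surjections
`π_n : C_n(A,B) → C_n(A',q(B))` commuting with all the actions, and the kernel of `π_n` is
`C_n(A,B)·ker q`: a kernel element sitting in an inner tensor factor lies in `B`, so the
balancing relations move it to the far right. Every right `B`-linear map `C_m → C_n` therefore
maps `ker π_m` into `ker π_n` and descends along the `π`'s; the descended maps are again
bimodule maps and still split, so each H-equivalence `C_{n+1} ∼ C_n`, and with it each depth
condition, passes to the quotient. -/

open LinearMap

theorem Function.Semiconj.descend {X Y X' Y' : Type*} {π : X → X'} {ρ : Y → Y'}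
    {f : X → Y} {f' : X' → Y'} {φ : X → X} {φ' : X' → X'} {ψ : Y → Y} {ψ' : Y' → Y'}
    (hπ : Function.Surjective π) (hf' : ∀ x, f' (π x) = ρ (f x))
    (hφ : Function.Semiconj π φ φ') (hψ : Function.Semiconj ρ ψ ψ')
    (h : Function.Semiconj f φ ψ) : Function.Semiconj f' φ' ψ' := by
  intro x'
  obtain ⟨x, rfl⟩ := hπ x'
  rw [← hφ, hf', hf', h, hψ]

theorem LinearMap.exists_factor_of_ker_le {R M N P : Type*} [Ring R] [AddCommGroup M]
    [AddCommGroup N] [AddCommGroup P] [Module R M] [Module R N] [Module R P] (π : M →ₗ[R] N)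
    (hπ : Function.Surjective π) (g : M →ₗ[R] P) (h : ker π ≤ ker g) :
    ∃ g' : N →ₗ[R] P, ∀ x, g' (π x) = g x := by
  refine ⟨(ker π).liftQ g h ∘ₗ (π.quotKerEquivOfSurjective hπ).symm.toLinearMap,
    fun x => ?_⟩
  have hx : (π.quotKerEquivOfSurjective hπ).symm (π x) = Submodule.Quotient.mk x := by
    rw [LinearEquiv.symm_apply_eq]; rfl
  rw [comp_apply, LinearEquiv.coe_toLinearMap, hx, Submodule.liftQ_apply]

theorem LinearMap.sum_comp_eq_id_of_factor {R M N M' N' : Type*} [Ring R] [AddCommGroup M]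
    [AddCommGroup N] [AddCommGroup M'] [AddCommGroup N'] [Module R M] [Module R N]
    [Module R M'] [Module R N'] {π : M →ₗ[R] M'} (ρ : N →ₗ[R] N')
    (hπ : Function.Surjective π) {r : ℕ} {f : Fin r → M →ₗ[R] N}
    {g : Fin r → N →ₗ[R] M} {f' : Fin r → M' →ₗ[R] N'} {g' : Fin r → N' →ₗ[R] M'}
    (hf' : ∀ i x, f' i (π x) = ρ (f i x)) (hg' : ∀ i y, g' i (ρ y) = π (g i y))
    (h : ∑ i, g i ∘ₗ f i = id) :
    ∑ i, g' i ∘ₗ f' i = id := by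
  ext x'
  obtain ⟨x, rfl⟩ := hπ x'
  calc (∑ i, g' i ∘ₗ f' i) (π x) = π ((∑ i, g i ∘ₗ f i) x) := by
        simp only [sum_apply, comp_apply, hf', hg', map_sum]
    _ = π x := by rw [h, id_apply]

theorem Subring.exists_apply_eq_coe {R S : Type*} [Ring R] [Ring S] (f : R →+* S)
    (s : Subring R) (y : s.map f) : ∃ x : s, f x = y :=
  let ⟨x, hx, hxy⟩ := Subring.mem_map.1 y.2
  ⟨⟨x, hx⟩, hxy⟩

theorem lA_mk (B : Subring A) (a : A) (n : ℕ) (t : (Tpow A n : Type u)) :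
    lA B a n (Submodule.Quotient.mk t) = Submodule.Quotient.mk (lmulT A a n t) :=
  Submodule.mapQ_apply (h := rel_le_comap_lmulT B a n) _ _ _ _

theorem rA_mk (B : Subring A) (a : A) (n : ℕ) (t : (Tpow A n : Type u)) :
    rA B a n (Submodule.Quotient.mk t) = Submodule.Quotient.mk (rmulT A a n t) :=
  Submodule.mapQ_apply (h := rel_le_comap_rmulT B a n) _ _ _ _

theorem rmulT_zero : ∀ n, rmulT A (0 : A) n = 0
  | 0 => by ext x; exact mul_zero (show A from x)
  | n + 1 => by rw [rmulT, rmulT_zero n, lTensor_zero]; rfl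

theorem rB_zero (B : Subring A) : ∀ n, rB B 0 n = 0
  | 0 => by ext x; exact mul_zero (show B from x)
  | n + 1 => by
    ext x
    obtain ⟨t, rfl⟩ := Submodule.Quotient.mk_surjective _ x
    show rA B 0 n (Submodule.Quotient.mk t) = 0
    rw [rA_mk, rmulT_zero, LinearMap.zero_apply, Submodule.Quotient.mk_zero]; rfl

/-- `TensorProduct.induction_on` stated with the `0` and `+` of `Tpow A (n + 1)`, which are not
syntactically those of `A ⊗[ℤ] Tpow A n`. -/
theorem Tpow.induction_on_succ {n : ℕ}
    {motive : (Tpow A (n + 1) : Type u) → Prop} (x : (Tpow A (n + 1) : Type u))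
    (zero : motive 0) (tmul : ∀ (a : A) (t : (Tpow A n : Type u)), motive (a ⊗ₜ[ℤ] t))
    (add : ∀ x y, motive x → motive y → motive (x + y)) : motive x :=
  TensorProduct.induction_on x zero tmul add

section Quotient

variable {A' : Type u} [Ring A'] (q : A →+* A')

noncomputable def Tpow.map : ∀ n, (Tpow A n : Type u) →ₗ[ℤ] (Tpow A' n : Type u)
  | 0 => (q : A →+ A').toIntLinearMap
  | n + 1 => TensorProduct.map (q : A →+ A').toIntLinearMap (Tpow.map n)

theorem Tpow.map_tmul (n : ℕ) (a : A) (t : (Tpow A n : Type u)) :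
    Tpow.map q (n + 1) (a ⊗ₜ[ℤ] t) = q a ⊗ₜ[ℤ] Tpow.map q n t := rfl

theorem Tpow.map_surjective (hq : Function.Surjective q) :
    ∀ n, Function.Surjective (Tpow.map q n)
  | 0 => hq
  | n + 1 => TensorProduct.map_surjective hq (Tpow.map_surjective hq n)

theorem Tpow.map_succ_apply (n : ℕ) (x : A ⊗[ℤ] (Tpow A n : Type u)) :
    Tpow.map q (n + 1) x = TensorProduct.map (q : A →+ A').toIntLinearMap (Tpow.map q n) x :=
  rfl

theorem Tpow.map_comp_lmulT (a : A) :
    ∀ n, Tpow.map q n ∘ₗ lmulT A a n = lmulT A' (q a) n ∘ₗ Tpow.map q n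
  | 0 => LinearMap.ext fun x => map_mul q a (show A from x)
  | n + 1 =>
    TensorProduct.ext' fun c t => congrArg (· ⊗ₜ[ℤ] Tpow.map q n t) (map_mul q a c)

theorem Tpow.map_comp_rmulT (a : A) :
    ∀ n, Tpow.map q n ∘ₗ rmulT A a n = rmulT A' (q a) n ∘ₗ Tpow.map q n
  | 0 => LinearMap.ext fun x => map_mul q (show A from x) a
  | n + 1 =>
    TensorProduct.ext' fun c t =>
      congrArg (q c ⊗ₜ[ℤ] ·) (LinearMap.congr_fun (Tpow.map_comp_rmulT a n) t)

theorem Tpow.map_lmulT (a : A) (n : ℕ) (x : (Tpow A n : Type u)) :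
    Tpow.map q n (lmulT A a n x) = lmulT A' (q a) n (Tpow.map q n x) :=
  LinearMap.congr_fun (Tpow.map_comp_lmulT q a n) x

theorem Tpow.map_rmulT (a : A) (n : ℕ) (x : (Tpow A n : Type u)) :
    Tpow.map q n (rmulT A a n x) = rmulT A' (q a) n (Tpow.map q n x) :=
  LinearMap.congr_fun (Tpow.map_comp_rmulT q a n) x

theorem rel_le_comap_Tpow_map (B : Subring A) :
    ∀ n, rel B n ≤ (rel (B.map q) n).comap (Tpow.map q n)
  | 0 => bot_le
  | n + 1 => by
    rw [rel_succ, Submodule.span_le]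
    rintro x (⟨a, b, t, rfl⟩ | ⟨a, r, hr, rfl⟩) <;>
      refine SetLike.mem_coe.mpr (Submodule.mem_comap.mpr ?_)
    · simp only [Tpow.map_succ_apply, map_sub, TensorProduct.map_tmul,
        AddMonoidHom.coe_toIntLinearMap, AddMonoidHom.coe_coe, Tpow.map_lmulT, map_mul]
      exact Submodule.subset_span
        (Or.inl ⟨q a, ⟨q b, Subring.mem_map.2 ⟨b, b.2, rfl⟩⟩, Tpow.map q n t, rfl⟩)
    · rw [Tpow.map_tmul]
      exact Submodule.subset_span
        (Or.inr ⟨q a, Tpow.map q n r, rel_le_comap_Tpow_map B n hr, rfl⟩)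

theorem rel_map_le_map_rel (B : Subring A) (hq : Function.Surjective q) :
    ∀ n, rel (B.map q) n ≤ (rel B n).map (Tpow.map q n)
  | 0 => bot_le
  | n + 1 => by
    rw [rel_succ, Submodule.span_le]
    rintro x (⟨a', b', t', rfl⟩ | ⟨a', r', hr', rfl⟩)
    · obtain ⟨a, rfl⟩ := hq a'
      obtain ⟨b, hb, hbb'⟩ := Subring.mem_map.1 b'.2
      obtain ⟨t, rfl⟩ := Tpow.map_surjective q hq n t'
      refine ⟨(a * b) ⊗ₜ[ℤ] t - a ⊗ₜ[ℤ] lmulT A b n t,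
        Submodule.subset_span (Or.inl ⟨a, ⟨b, hb⟩, t, rfl⟩), ?_⟩
      simp only [Tpow.map_succ_apply, map_sub, TensorProduct.map_tmul,
        AddMonoidHom.coe_toIntLinearMap, AddMonoidHom.coe_coe, Tpow.map_lmulT, map_mul, hbb']
      rfl
    · obtain ⟨a, rfl⟩ := hq a'
      obtain ⟨r, hr, rfl⟩ := rel_map_le_map_rel B hq n hr'
      exact ⟨a ⊗ₜ[ℤ] r, Submodule.subset_span (Or.inr ⟨a, r, hr, rfl⟩),
        Tpow.map_tmul q n a r⟩

noncomputable def Tpow.rightMulKer (n : ℕ) : Submodule ℤ (Tpow A n : Type u) :=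
  Submodule.span ℤ {y | ∃ x, q x = 0 ∧ ∃ t, y = rmulT A x n t}

variable (B : Subring A)

theorem tmul_mem_rel_sup_rightMulKer (n : ℕ) (a : A) {t : (Tpow A n : Type u)}
    (ht : t ∈ rel B n ⊔ Tpow.rightMulKer q n) :
    (a ⊗ₜ[ℤ] t : A ⊗[ℤ] (Tpow A n : Type u)) ∈
      rel B (n + 1) ⊔ Tpow.rightMulKer q (n + 1) := by
  refine (sup_le (fun r hr => ?_) (Submodule.span_le.2 ?_) : rel B n ⊔ Tpow.rightMulKer q n ≤
    (rel B (n + 1) ⊔ Tpow.rightMulKer q (n + 1)).comap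
      (TensorProduct.mk ℤ A (Tpow A n : Type u) a)) ht
  · exact Submodule.mem_sup_left (Submodule.subset_span (Or.inr ⟨a, r, hr, rfl⟩))
  · rintro _ ⟨x, hx, t, rfl⟩
    exact Submodule.mem_sup_right (Submodule.subset_span ⟨x, hx, a ⊗ₜ[ℤ] t, rfl⟩)

variable {B} in
theorem lmulT_mem_rel_sup_rightMulKer (hker : ∀ x, q x = 0 → x ∈ B) :
    ∀ (n : ℕ) (x : A), q x = 0 → ∀ t : (Tpow A n : Type u),
      lmulT A x n t ∈ rel B n ⊔ Tpow.rightMulKer q n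
  | 0, x, hx, t => Submodule.mem_sup_right
      (Submodule.subset_span ⟨x * (show A from t), by rw [map_mul, hx, zero_mul], (1 : A),
        (one_mul (x * show A from t)).symm⟩)
  | n + 1, x, hx, t => by
    induction t using Tpow.induction_on_succ with
    | zero => rw [map_zero]; exact zero_mem _
    | tmul c s =>
      have hxc : q (x * c) = 0 := by rw [map_mul, hx, zero_mul]
      -- `x * c ∈ B` crosses the first tensor sign, leaving `1 ⊗ (x * c) • s`
      have hrel : ((1 * (x * c)) ⊗ₜ[ℤ] s : A ⊗[ℤ] (Tpow A n : Type u)) -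
          1 ⊗ₜ[ℤ] lmulT A (x * c) n s ∈ rel B (n + 1) :=
        Submodule.subset_span (Or.inl ⟨1, ⟨x * c, hker _ hxc⟩, s, rfl⟩)
      rw [one_mul] at hrel
      rw [lmulT_succ_apply, rTensor_tmul, mulLeft_apply]
      exact (Submodule.sub_mem_iff_left (rel B (n + 1) ⊔ Tpow.rightMulKer q (n + 1))
        (tmul_mem_rel_sup_rightMulKer q B n 1 (lmulT_mem_rel_sup_rightMulKer hker n (x * c) hxc s))
        ).1 (Submodule.mem_sup_left hrel)
    | add y z hy hz => rw [map_add]; exact add_mem hy hz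

variable {B} in
theorem ker_Tpow_map_le (hq : Function.Surjective q) (hker : ∀ x, q x = 0 → x ∈ B) :
    ∀ n, ker (Tpow.map q n) ≤ rel B n ⊔ Tpow.rightMulKer q n
  | 0 => fun x hx => Submodule.mem_sup_right
      (Submodule.subset_span ⟨x, hx, (1 : A), (one_mul (show A from x)).symm⟩)
  | n + 1 => by
    -- `map_ker` is stated for the submodule structure, not `AddCommGroup.toIntModule`
    let _ : Module ℤ (ker (Tpow.map q n)) := (ker (Tpow.map q n)).module
    have hl (z : A ⊗[ℤ] ker (Tpow.map q n)) :
        lTensor A (ker (Tpow.map q n)).subtype z ∈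
          rel B (n + 1) ⊔ Tpow.rightMulKer q (n + 1) := by
      induction z using TensorProduct.induction_on with
      | zero => rw [map_zero]; exact zero_mem _
      | tmul a k =>
        rw [lTensor_tmul]
        exact tmul_mem_rel_sup_rightMulKer q B n a (ker_Tpow_map_le hq hker n k.2)
      | add y z hy hz => rw [map_add]; exact add_mem hy hz
    have hr (z : ker (q : A →+ A').toIntLinearMap ⊗[ℤ] (Tpow A n : Type u)) :
        rTensor _ (ker (q : A →+ A').toIntLinearMap).subtype z ∈
          rel B (n + 1) ⊔ Tpow.rightMulKer q (n + 1) := by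
      induction z using TensorProduct.induction_on with
      | zero => rw [map_zero]; exact zero_mem _
      | tmul i s =>
        have his : ((i : A) ⊗ₜ[ℤ] s : A ⊗[ℤ] (Tpow A n : Type u)) =
            lmulT A i (n + 1) ((1 : A) ⊗ₜ[ℤ] s) := by
          rw [lmulT_succ_apply, rTensor_tmul, mulLeft_apply, mul_one]
        rw [rTensor_tmul, Submodule.coe_subtype, his]
        exact lmulT_mem_rel_sup_rightMulKer q hker (n + 1) i i.2 _
      | add y z hy hz => rw [map_add]; exact add_mem hy hz
    intro t ht
    have ht' : t ∈ ker (TensorProduct.map (q : A →+ A').toIntLinearMap (Tpow.map q n)) := ht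
    rw [TensorProduct.map_ker (exact_subtype_ker_map _) hq (exact_subtype_ker_map _)
      (Tpow.map_surjective q hq n)] at ht'
    obtain ⟨_, ⟨u, rfl⟩, _, ⟨v, rfl⟩, rfl⟩ :=
      (Submodule.mem_sup (M := A ⊗[ℤ] (Tpow A n : Type u))).1 ht'
    exact add_mem (hl u) (hr v)

noncomputable def CC.map : ∀ n, (CC B n : Type u) →ₗ[ℤ] (CC (B.map q) n : Type u)
  | 0 => ((q.restrict B (B.map q) fun x hx => Subring.mem_map.2 ⟨x, hx, rfl⟩ :
      B →+* B.map q) : B →+ B.map q).toIntLinearMap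
  | n + 1 => ModuleCat.Hom.hom
      (ModuleCat.ofHom (Submodule.mapQ _ _ (Tpow.map q n) (rel_le_comap_Tpow_map q B n)))

theorem CC.map_mk (n : ℕ) (t : (Tpow A n : Type u)) :
    CC.map q B (n + 1) (Submodule.Quotient.mk t) = Submodule.Quotient.mk (Tpow.map q n t) :=
  rfl

theorem CC.map_surjective (hq : Function.Surjective q) : ∀ n, Function.Surjective (CC.map q B n)
  | 0 => by
    rintro ⟨_, x, hx, rfl⟩
    exact ⟨⟨x, hx⟩, rfl⟩
  | n + 1 => by
    intro y
    obtain ⟨t', rfl⟩ := Submodule.Quotient.mk_surjective _ y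
    obtain ⟨t, rfl⟩ := Tpow.map_surjective q hq n t'
    exact ⟨Submodule.Quotient.mk t, CC.map_mk q B n t⟩

theorem CC.map_lA (n : ℕ) (a : A) (x : (CC B (n + 1) : Type u)) :
    CC.map q B (n + 1) (lA B a n x) = lA (B.map q) (q a) n (CC.map q B (n + 1) x) := by
  obtain ⟨t, rfl⟩ := Submodule.Quotient.mk_surjective _ x
  rw [lA_mk, CC.map_mk, CC.map_mk, lA_mk, Tpow.map_lmulT]

theorem CC.map_rA (n : ℕ) (a : A) (x : (CC B (n + 1) : Type u)) :
    CC.map q B (n + 1) (rA B a n x) = rA (B.map q) (q a) n (CC.map q B (n + 1) x) := by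
  obtain ⟨t, rfl⟩ := Submodule.Quotient.mk_surjective _ x
  rw [rA_mk, CC.map_mk, CC.map_mk, rA_mk, Tpow.map_rmulT]

theorem CC.map_lB (b : B) (b' : B.map q) (hb : q b = b') : ∀ n (x : (CC B n : Type u)),
    CC.map q B n (lB B b n x) = lB (B.map q) b' n (CC.map q B n x)
  | 0, _ => Subtype.ext ((map_mul q _ _).trans (congrArg (· * _) hb))
  | n + 1, x => (CC.map_lA q B n b x).trans (congrArg (lA (B.map q) · n _) hb)

theorem CC.map_rB (b : B) (b' : B.map q) (hb : q b = b') : ∀ n (x : (CC B n : Type u)),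
    CC.map q B n (rB B b n x) = rB (B.map q) b' n (CC.map q B n x)
  | 0, _ => Subtype.ext ((map_mul q _ _).trans (congrArg (_ * ·) hb))
  | n + 1, x => (CC.map_rA q B n b x).trans (congrArg (rA (B.map q) · n _) hb)

noncomputable def CC.rightMulKer (n : ℕ) : Submodule ℤ (CC B n : Type u) :=
  Submodule.span ℤ {y | ∃ b : B, q b = 0 ∧ ∃ c, y = rB B b n c}

theorem CC.rightMulKer_le_ker_map (n : ℕ) : CC.rightMulKer q B n ≤ ker (CC.map q B n) := by
  refine Submodule.span_le.2 ?_
  rintro _ ⟨b, hb, c, rfl⟩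
  rw [SetLike.mem_coe, mem_ker, CC.map_rB q B b 0 hb, rB_zero, LinearMap.zero_apply]

theorem CC.rightMulKer_le_comap {m n : ℕ} (f : (CC B m : Type u) →ₗ[ℤ] (CC B n : Type u))
    (hf : ∀ b : B, Function.Semiconj f (rB B b m) (rB B b n)) :
    CC.rightMulKer q B m ≤ (CC.rightMulKer q B n).comap f := by
  refine Submodule.span_le.2 ?_
  rintro _ ⟨b, hb, c, rfl⟩
  exact Submodule.subset_span ⟨b, hb, f c, hf b c⟩

variable {B} in
theorem CC.mk_mem_rightMulKer (hker : ∀ x, q x = 0 → x ∈ B) (n : ℕ)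
    {t : (Tpow A n : Type u)} (ht : t ∈ rel B n ⊔ Tpow.rightMulKer q n) :
    (Submodule.Quotient.mk t : (CC B (n + 1) : Type u)) ∈ CC.rightMulKer q B (n + 1) := by
  obtain ⟨r, hr, i, hi, rfl⟩ := Submodule.mem_sup.1 ht
  rw [Submodule.Quotient.mk_add, (Submodule.Quotient.mk_eq_zero _).2 hr, zero_add]
  clear ht
  induction hi using Submodule.span_induction with
  | mem _ hy =>
    obtain ⟨x, hx, t, rfl⟩ := hy
    exact Submodule.subset_span
      ⟨⟨x, hker x hx⟩, hx, Submodule.Quotient.mk t, (rA_mk B x n t).symm⟩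
  | zero => exact zero_mem _
  | add y z _ _ hy hz => exact add_mem hy hz
  | smul c y _ hy =>
    -- `CC B (n + 1)` carries `AddCommGroup.toIntModule`, not `Submodule.Quotient.module`
    have hcy := int_smul_eq_zsmul (Submodule.Quotient.module (rel B n)) c (Submodule.Quotient.mk y)
    exact (congrArg (· ∈ CC.rightMulKer q B (n + 1)) hcy).mpr (Submodule.smul_mem _ c hy)

variable {B} in
theorem CC.ker_map_le_rightMulKer (hq : Function.Surjective q) (hker : ∀ x, q x = 0 → x ∈ B) :
    ∀ n, ker (CC.map q B n) ≤ CC.rightMulKer q B n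
  | 0 => fun x hx => Submodule.subset_span
      ⟨x, congrArg Subtype.val hx, (1 : B), (one_mul (show B from x)).symm⟩
  | n + 1 => by
    intro x hx
    rw [mem_ker] at hx
    obtain ⟨t, rfl⟩ := Submodule.Quotient.mk_surjective _ x
    rw [CC.map_mk] at hx
    obtain ⟨s, hs, hst⟩ := rel_map_le_map_rel q B hq n ((Submodule.Quotient.mk_eq_zero _).1 hx)
    have hts : t - s ∈ ker (Tpow.map q n) := by rw [mem_ker, map_sub, hst, sub_self]
    have ht : t ∈ rel B n ⊔ Tpow.rightMulKer q n := by
      simpa only [sub_add_cancel] using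
        add_mem (ker_Tpow_map_le q hq hker n hts) (Submodule.mem_sup_left hs)
    exact CC.mk_mem_rightMulKer q hker n ht

variable {B}

theorem CC.exists_descend (hq : Function.Surjective q) (hker : ∀ x, q x = 0 → x ∈ B)
    {m n : ℕ} (f : (CC B m : Type u) →ₗ[ℤ] (CC B n : Type u))
    (hf : ∀ b : B, Function.Semiconj f (rB B b m) (rB B b n)) :
    ∃ f' : (CC (B.map q) m : Type u) →ₗ[ℤ] (CC (B.map q) n : Type u),
      ∀ x, f' (CC.map q B m x) = CC.map q B n (f x) :=
  exists_factor_of_ker_le _ (CC.map_surjective q B hq m) (CC.map q B n ∘ₗ f) fun _ hx =>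
    CC.rightMulKer_le_ker_map q B n
      (CC.rightMulKer_le_comap q B f hf (CC.ker_map_le_rightMulKer q hq hker m hx))

section Descend

variable (hq : Function.Surjective q)
include hq

theorem IsBBHom.descend {m n : ℕ} {f : (CC B m : Type u) →ₗ[ℤ] (CC B n : Type u)}
    {f' : (CC (B.map q) m : Type u) →ₗ[ℤ] (CC (B.map q) n : Type u)}
    (hf' : ∀ x, f' (CC.map q B m x) = CC.map q B n (f x)) (hf : IsBBHom B f) :
    IsBBHom (B.map q) f' := by
  intro b'
  obtain ⟨b, hb⟩ := Subring.exists_apply_eq_coe q B b'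
  exact ⟨Function.Semiconj.descend (CC.map_surjective q B hq m) hf'
      (CC.map_lB q B b b' hb m) (CC.map_lB q B b b' hb n) (hf b).1,
    Function.Semiconj.descend (CC.map_surjective q B hq m) hf'
      (CC.map_rB q B b b' hb m) (CC.map_rB q B b b' hb n) (hf b).2⟩

theorem IsABHom.descend {m n : ℕ}
    {f : (CC B (m + 1) : Type u) →ₗ[ℤ] (CC B (n + 1) : Type u)}
    {f' : (CC (B.map q) (m + 1) : Type u) →ₗ[ℤ] (CC (B.map q) (n + 1) : Type u)}
    (hf' : ∀ x, f' (CC.map q B (m + 1) x) = CC.map q B (n + 1) (f x)) (hf : IsABHom B f) :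
    IsABHom (B.map q) f' := by
  refine ⟨fun a' => ?_, fun b' => ?_⟩
  · obtain ⟨a, rfl⟩ := hq a'
    exact Function.Semiconj.descend (CC.map_surjective q B hq (m + 1)) hf'
      (CC.map_lA q B m a) (CC.map_lA q B n a) (hf.1 a)
  · obtain ⟨b, hb⟩ := Subring.exists_apply_eq_coe q B b'
    exact Function.Semiconj.descend (CC.map_surjective q B hq (m + 1)) hf'
      (CC.map_rB q B b b' hb (m + 1)) (CC.map_rB q B b b' hb (n + 1)) (hf.2 b)

theorem IsBAHom.descend {m n : ℕ}
    {f : (CC B (m + 1) : Type u) →ₗ[ℤ] (CC B (n + 1) : Type u)}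
    {f' : (CC (B.map q) (m + 1) : Type u) →ₗ[ℤ] (CC (B.map q) (n + 1) : Type u)}
    (hf' : ∀ x, f' (CC.map q B (m + 1) x) = CC.map q B (n + 1) (f x)) (hf : IsBAHom B f) :
    IsBAHom (B.map q) f' := by
  refine ⟨fun b' => ?_, fun a' => ?_⟩
  · obtain ⟨b, hb⟩ := Subring.exists_apply_eq_coe q B b'
    exact Function.Semiconj.descend (CC.map_surjective q B hq (m + 1)) hf'
      (CC.map_lB q B b b' hb (m + 1)) (CC.map_lB q B b b' hb (n + 1)) (hf.1 b)
  · obtain ⟨a, rfl⟩ := hq a'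
    exact Function.Semiconj.descend (CC.map_surjective q B hq (m + 1)) hf'
      (CC.map_rA q B m a) (CC.map_rA q B n a) (hf.2 a)

variable (hker : ∀ x, q x = 0 → x ∈ B) {m n : ℕ}
include hker

theorem DividesBB.map (h : DividesBB B m n) : DividesBB (B.map q) m n := by
  obtain ⟨r, f, g, hf, hg, hgf⟩ := h
  choose f' hf' using fun i => CC.exists_descend q hq hker (f i) fun b => (hf i b).2
  choose g' hg' using fun i => CC.exists_descend q hq hker (g i) fun b => (hg i b).2
  exact ⟨r, f', g', fun i => (hf i).descend q hq (hf' i), fun i => (hg i).descend q hq (hg' i),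
    sum_comp_eq_id_of_factor _ (CC.map_surjective q B hq m) hf' hg' hgf⟩

theorem DividesAB.map (h : DividesAB B m n) : DividesAB (B.map q) m n := by
  obtain ⟨r, f, g, hf, hg, hgf⟩ := h
  choose f' hf' using fun i => CC.exists_descend q hq hker (f i) (hf i).2
  choose g' hg' using fun i => CC.exists_descend q hq hker (g i) (hg i).2
  exact ⟨r, f', g', fun i => (hf i).descend q hq (hf' i), fun i => (hg i).descend q hq (hg' i),
    sum_comp_eq_id_of_factor _ (CC.map_surjective q B hq (m + 1)) hf' hg' hgf⟩

theorem DividesBA.map (h : DividesBA B m n) : DividesBA (B.map q) m n := by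
  obtain ⟨r, f, g, hf, hg, hgf⟩ := h
  choose f' hf' using fun i => CC.exists_descend q hq hker (f i) fun b => (hf i).2 b
  choose g' hg' using fun i => CC.exists_descend q hq hker (g i) fun b => (hg i).2 b
  exact ⟨r, f', g', fun i => (hf i).descend q hq (hf' i), fun i => (hg i).descend q hq (hg' i),
    sum_comp_eq_id_of_factor _ (CC.map_surjective q B hq (m + 1)) hf' hg' hgf⟩

theorem HequivBB.map (h : HequivBB B m n) : HequivBB (B.map q) m n :=
  ⟨h.1.map q hq hker, h.2.map q hq hker⟩

theorem HequivAB.map (h : HequivAB B m n) : HequivAB (B.map q) m n :=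
  ⟨h.1.map q hq hker, h.2.map q hq hker⟩

theorem HequivBA.map (h : HequivBA B m n) : HequivBA (B.map q) m n :=
  ⟨h.1.map q hq hker, h.2.map q hq hker⟩

theorem HasDepth.map {d : ℕ} (h : HasDepth B d) : HasDepth (B.map q) d := by
  rcases h with ⟨n, rfl, h⟩ | ⟨n, rfl, h | h⟩
  · exact Or.inl ⟨n, rfl, h.map q hq hker⟩
  · exact Or.inr ⟨n, rfl, Or.inl (h.map q hq hker)⟩
  · exact Or.inr ⟨n, rfl, Or.inr (h.map q hq hker)⟩

theorem depth_map_le : depth (B.map q) ≤ depth B := by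
  refine sInf_le_sInf ?_
  rintro _ ⟨d, hd, rfl⟩
  exact ⟨d, hd.map q hq hker, rfl⟩

end Descend

end Quotient

/-- Let `B ⊆ A` be an extension of `k`-algebras and `I` an ideal of `A`
contained in `B`.  If `B ⊆ A` has depth `2n+1` (resp. left or right depth `2n`), then so
does the quotient extension `B/I ⊆ A/I` (realized as the image of `B` in `A/I`); in
particular `d(B/I, A/I) ≤ d(B,A)`. -/
theorem depth_quotient_le
    (k : Type u) [CommRing k] (A : Type u) [Ring A] [Algebra k A] (B : Subalgebra k A)
    (I : TwoSidedIdeal A) (hIB : ∀ x ∈ I, x ∈ B) :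
    (∀ n : ℕ, HequivBB B.toSubring (n+1) n →
      HequivBB (B.toSubring.map (I.ringCon.mk' : A →+* I.ringCon.Quotient)) (n+1) n) ∧
    (∀ n : ℕ, HequivAB B.toSubring (n+1) n →
      HequivAB (B.toSubring.map (I.ringCon.mk' : A →+* I.ringCon.Quotient)) (n+1) n) ∧
    (∀ n : ℕ, HequivBA B.toSubring (n+1) n →
      HequivBA (B.toSubring.map (I.ringCon.mk' : A →+* I.ringCon.Quotient)) (n+1) n) ∧
    depth (B.toSubring.map (I.ringCon.mk' : A →+* I.ringCon.Quotient)) ≤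
      depth B.toSubring := by
  have hq : Function.Surjective (I.ringCon.mk' : A →+* I.ringCon.Quotient) :=
    I.ringCon.mk'_surjective
  have hker (x : A) (hx : (I.ringCon.mk' : A →+* I.ringCon.Quotient) x = 0) : x ∈ B.toSubring :=
    hIB x (I.ringCon.eq.1 hx)
  exact ⟨fun _ h => h.map _ hq hker, fun _ h => h.map _ hq hker, fun _ h => h.map _ hq hker,
    depth_map_le _ hq hker⟩
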